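/- arXiv:1507.05766 — 2 statements merged into one kernel-verified Lean document; each statement's English description precedes it below -/
import Mathlib

section
/- Let S be an action-based randomization mechanism, U an uncertainty measure and p a prior on X. For every finite strategy σ, I_σ(S,p) ≤ I(X;[X]), where I(X;[X]) = U(p) − Σ_{c ∈ X/≡} p(c)·U(p(·|c)) is the information gained by learning the indistinguishability class of the secret. Consequently the maximum information flow I_⋆(S,p) = sup_σ I_σ(S,p) is at most I(X;[X]). -/
open scoped BigOperators Classical

noncomputable section

variable {X Y A : Type*}

/-- Conditional product of transition probabilities along `ys`, where the action at each
step is chosen by the strategy `σ` applied to the accumulated prefix `pre`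
(`0` if the strategy is undefined on some prefix). -/
def likAux (M : A → X → Y → ℝ) (σ : List Y → Option A) (x : X) : List Y → List Y → ℝ
  | _, [] => 1
  | pre, y :: ys => ((σ pre).elim 0 fun a => M a x y) * likAux M σ x (pre ++ [y]) ys

/-- `p_σ(ys | x)`: the probability of the (maximal) observation sequence `ys`
given the secret `x`, under the finite strategy `σ`. A sequence is maximal when its
last proper prefix is in the domain of `σ` but the sequence itself is not. -/
def condDist (M : A → X → Y → ℝ) (σ : List Y → Option A) (x : X) (ys : List Y) : ℝ :=
  if ys ≠ [] ∧ (σ ys.dropLast).isSome ∧ σ ys = none then likAux M σ x [] ys else 0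

/-- joint distribution `p_σ(x, ys)` induced by the prior `p` and the strategy `σ`. -/
def joint (M : A → X → Y → ℝ) (σ : List Y → Option A) (p : X → ℝ) (x : X) (ys : List Y) : ℝ :=
  p x * condDist M σ x ys

/-- marginal `p_σ(ys)` on observation sequences. -/
def obsProb [Fintype X] (M : A → X → Y → ℝ) (σ : List Y → Option A) (p : X → ℝ)
    (ys : List Y) : ℝ :=
  ∑ x : X, joint M σ p x ys

/-- posterior `p_σ(·|ys)` on secrets. -/
def post [Fintype X] (M : A → X → Y → ℝ) (σ : List Y → Option A) (p : X → ℝ)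
    (ys : List Y) : X → ℝ :=
  fun x => joint M σ p x ys / obsProb M σ p ys

/-- conditional uncertainty `U_σ(X|Y) = Σ_{ys : p_σ(ys)>0} p_σ(ys)·U(p_σ(·|ys))`
(terms with `p_σ(ys) = 0` contribute `0`). -/
def condUncert [Fintype X] (U : (X → ℝ) → ℝ) (M : A → X → Y → ℝ) (σ : List Y → Option A)
    (p : X → ℝ) : ℝ :=
  ∑' ys : List Y, obsProb M σ p ys * U (post M σ p ys)

/-- information leakage `I_σ(S,p) = U(p) − U_σ(X|Y)`. -/
def leak [Fintype X] (U : (X → ℝ) → ℝ) (M : A → X → Y → ℝ) (σ : List Y → Option A)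
    (p : X → ℝ) : ℝ :=
  U p - condUncert U M σ p

/-- the domain of a strategy is prefix-closed. -/
def PrefixClosed (σ : List Y → Option A) : Prop :=
  ∀ l l' : List Y, l <+: l' → (σ l').isSome → (σ l).isSome

/-- a finite strategy: nonempty prefix-closed finite domain. -/
def FiniteStrategy (σ : List Y → Option A) : Prop :=
  (σ []).isSome ∧ PrefixClosed σ ∧ {l : List Y | (σ l).isSome}.Finite

/-- the strategy has length exactly `n` (one plus the maximal length of a sequence
in its domain). -/
def HasLength (σ : List Y → Option A) (n : ℕ) : Prop :=
  (∀ ys, (σ ys).isSome → ys.length + 1 ≤ n) ∧ ∃ ys, (σ ys).isSome ∧ ys.length + 1 = n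

/-- the set of actions occurring in a strategy. -/
def rangeActs (σ : List Y → Option A) : Set A :=
  {a | ∃ ys, σ ys = some a}

/-- the non-adaptive (complete) strategy playing the listed actions in order:
the action played only depends on the number of past observations. -/
def ofList (as : List A) : List Y → Option A := fun ys => as[ys.length]?

/-- an action-based randomization mechanism: each row of each matrix `M_a` is a
probability distribution on observations. -/
def IsMechanism [Fintype Y] (M : A → X → Y → ℝ) : Prop :=
  ∀ a x, M a x ∈ stdSimplex ℝ Y

/-- an uncertainty measure: concave and continuous on the probability simplex. -/
def IsUncertainty [Fintype X] (U : (X → ℝ) → ℝ) : Prop :=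
  ConcaveOn ℝ (stdSimplex ℝ X) U ∧ ContinuousOn U (stdSimplex ℝ X)

/-- indistinguishability: `x ≡ x'` iff `p_a(·|x) = p_a(·|x')` for every action `a`. -/
def mSetoid (M : A → X → Y → ℝ) : Setoid X :=
  ⟨fun x x' => ∀ a y, M a x y = M a x' y,
   ⟨fun _ _ _ => rfl, fun h a y => (h a y).symm, fun h1 h2 a y => (h1 a y).trans (h2 a y)⟩⟩

/-- `p(c)`: total prior mass of the indistinguishability class `c`. -/
def classMass [Fintype X] (M : A → X → Y → ℝ) (p : X → ℝ)
    (c : Quotient (mSetoid M)) : ℝ :=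
  ∑ x ∈ Finset.univ.filter (fun x => Quotient.mk (mSetoid M) x = c), p x

/-- `p(·|c)`: the prior conditioned on the indistinguishability class `c`. -/
def classCondDist [Fintype X] (M : A → X → Y → ℝ) (p : X → ℝ)
    (c : Quotient (mSetoid M)) : X → ℝ :=
  fun x => if Quotient.mk (mSetoid M) x = c then p x / classMass M p c else 0

/-- `U(X|[X]) = Σ_{c ∈ X/≡} p(c)·U(p(·|c))`: the uncertainty left after learning the
indistinguishability class of the secret.  The gain `I(X;[X])` is `U(p) - classUncert`. -/
def classUncert [Fintype X] (U : (X → ℝ) → ℝ) (M : A → X → Y → ℝ) (p : X → ℝ) : ℝ :=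
  ∑ c ∈ Finset.univ.image (Quotient.mk (mSetoid M)),
    classMass M p c * U (classCondDist M p c)


/-! ### Auxiliary lemmas -/

lemma likAux_nonneg [Fintype Y] {M : A → X → Y → ℝ} (hM : IsMechanism M)
    (σ : List Y → Option A) (x : X) :
    ∀ (ts pre : List Y), 0 ≤ likAux M σ x pre ts := by
  intro ts
  induction ts with
  | nil => intro pre; simp [likAux]
  | cons y ts ih =>
    intro pre
    rw [likAux]
    apply mul_nonneg _ (ih _)
    cases h : σ pre with
    | none => simp
    | some a => simpa using (hM a x).1 y

lemma likAux_congr (M : A → X → Y → ℝ) (σ : List Y → Option A) {x x' : X}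
    (h : ∀ a y, M a x y = M a x' y) :
    ∀ (ts pre : List Y), likAux M σ x pre ts = likAux M σ x' pre ts := by
  intro ts
  induction ts with
  | nil => intro pre; simp [likAux]
  | cons y ts ih =>
    intro pre
    rw [likAux, likAux, ih]
    congr 1
    cases σ pre <;> simp [h]

/-- `condDist` relative to a starting prefix `pre`. -/
def condFrom (M : A → X → Y → ℝ) (σ : List Y → Option A) (x : X) (pre ys : List Y) : ℝ :=
  if pre <+: ys ∧ (σ ys.dropLast).isSome ∧ σ ys = none
  then likAux M σ x pre (ys.drop pre.length) else 0

lemma condDist_eq_condFrom (M : A → X → Y → ℝ) (σ : List Y → Option A) (x : X) (ys : List Y) :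
    condDist M σ x ys = condFrom M σ x [] ys := by
  rcases eq_or_ne ys [] with rfl | h
  · cases h' : σ ([] : List Y) <;> simp [condDist, condFrom, h']
  · simp [condDist, condFrom, h]

lemma condFrom_split [Fintype Y] (M : A → X → Y → ℝ) (σ : List Y → Option A) (x : X)
    {pre : List Y} (hpre : (σ pre).isSome) (ys : List Y) :
    condFrom M σ x pre ys =
      ∑ y : Y, ((σ pre).elim 0 fun a => M a x y) * condFrom M σ x (pre ++ [y]) ys := by
  by_cases hmax : (σ ys.dropLast).isSome ∧ σ ys = none
  · by_cases hp : pre <+: ys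
    · obtain ⟨t, rfl⟩ := hp
      rcases t with _ | ⟨y, ts⟩
      · exfalso
        rw [List.append_nil] at hmax
        rw [hmax.2] at hpre
        simp at hpre
      · rw [Finset.sum_eq_single y]
        · have h1 : condFrom M σ x pre (pre ++ y :: ts) = likAux M σ x pre (y :: ts) := by
            rw [condFrom, if_pos ⟨List.prefix_append _ _, hmax⟩, List.drop_left]
          have he : pre ++ y :: ts = (pre ++ [y]) ++ ts := by simp
          have h2 : condFrom M σ x (pre ++ [y]) (pre ++ y :: ts) =
              likAux M σ x (pre ++ [y]) ts := by
            rw [condFrom, if_pos ⟨by rw [he]; exact List.prefix_append _ _, hmax⟩, he,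
              List.drop_left]
          rw [h1, h2, likAux]
        · intro y' _ hy'
          have hnp : ¬ (pre ++ [y'] <+: pre ++ y :: ts) := by
            rw [List.prefix_append_right_inj]
            intro hc
            rcases List.cons_prefix_cons.mp hc with ⟨rfl, -⟩
            exact hy' rfl
          rw [condFrom, if_neg (fun hc => hnp hc.1), mul_zero]
        · intro h; exact absurd (Finset.mem_univ y) h
    · rw [condFrom, if_neg (fun hc => hp hc.1)]
      symm
      apply Finset.sum_eq_zero
      intro y _
      rw [condFrom, if_neg, mul_zero]
      intro hc
      exact hp ((List.prefix_append pre [y]).trans hc.1)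
  · rw [condFrom, if_neg (fun hc => hmax hc.2)]
    symm
    apply Finset.sum_eq_zero
    intro y _
    rw [condFrom, if_neg (fun hc => hmax hc.2), mul_zero]

lemma prefix_dropLast_of_prefix {α : Type*} {l b : List α} (h : l <+: b)
    (hlen : l.length + 1 ≤ b.length) : l <+: b.dropLast := by
  obtain ⟨t, rfl⟩ := h
  rcases t.eq_nil_or_concat' with rfl | ⟨t', a, rfl⟩
  · simp at hlen
  · rw [show l ++ (t' ++ [a]) = (l ++ t') ++ [a] by simp, List.dropLast_concat]
    exact List.prefix_append l t'

lemma sum_condFrom_child_none [Fintype Y] {M : A → X → Y → ℝ}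
    {σ : List Y → Option A} (hpc : PrefixClosed σ)
    (D : Finset (List Y)) (hD : ∀ l, (σ l).isSome → l ∈ D) (x : X)
    {pre : List Y} (hpre : (σ pre).isSome) (y : Y) (hy : σ (pre ++ [y]) = none) :
    ∑ ys ∈ (D ×ˢ (Finset.univ : Finset Y)).image (fun q : List Y × Y => q.1 ++ [q.2]),
      condFrom M σ x (pre ++ [y]) ys = 1 := by
  rw [Finset.sum_eq_single_of_mem (pre ++ [y])]
  · rw [condFrom, if_pos ⟨List.prefix_refl _,
      by rw [List.dropLast_concat]; exact hpre, hy⟩, List.drop_length]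
    simp [likAux]
  · exact Finset.mem_image.mpr ⟨(pre, y),
      Finset.mem_product.mpr ⟨hD pre hpre, Finset.mem_univ y⟩, rfl⟩
  · intro b _ hb
    rw [condFrom, if_neg]
    rintro ⟨hpb, hds, -⟩
    have hlt : (pre ++ [y]).length + 1 ≤ b.length := by
      rcases lt_or_eq_of_le hpb.length_le with h | h
      · omega
      · exact absurd (hpb.eq_of_length h).symm hb
    have hsm := hpc (pre ++ [y]) b.dropLast (prefix_dropLast_of_prefix hpb hlt) hds
    rw [hy] at hsm
    simp at hsm

lemma sum_condFrom_step [Fintype Y] {M : A → X → Y → ℝ} (hM : IsMechanism M)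
    (σ : List Y → Option A) (x : X) (E : Finset (List Y))
    {pre : List Y} (hpre : (σ pre).isSome)
    (hch : ∀ y : Y, ∑ ys ∈ E, condFrom M σ x (pre ++ [y]) ys = 1) :
    ∑ ys ∈ E, condFrom M σ x pre ys = 1 := by
  rw [Finset.sum_congr rfl fun ys _ => condFrom_split M σ x hpre ys, Finset.sum_comm]
  obtain ⟨a, ha⟩ := Option.isSome_iff_exists.mp hpre
  have hterm : ∀ y : Y,
      ∑ ys ∈ E, ((σ pre).elim 0 fun a => M a x y) * condFrom M σ x (pre ++ [y]) ys
        = M a x y := by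
    intro y
    rw [← Finset.mul_sum, hch y, mul_one, ha, Option.elim_some]
  rw [Finset.sum_congr rfl fun y _ => hterm y]
  exact (hM a x).2

lemma sum_condFrom [Fintype Y] {M : A → X → Y → ℝ} (hM : IsMechanism M)
    {σ : List Y → Option A} (hpc : PrefixClosed σ)
    {D : Finset (List Y)} (hD : ∀ l, (σ l).isSome → l ∈ D)
    {N : ℕ} (hN : ∀ l, (σ l).isSome → l.length ≤ N) (x : X) :
    ∀ (n : ℕ) (pre : List Y), (σ pre).isSome → N ≤ pre.length + n →
      ∑ ys ∈ (D ×ˢ (Finset.univ : Finset Y)).image (fun q : List Y × Y => q.1 ++ [q.2]),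
        condFrom M σ x pre ys = 1 := by
  intro n
  induction n with
  | zero =>
    intro pre hpre hlen
    refine sum_condFrom_step hM σ x _ hpre fun y => ?_
    refine sum_condFrom_child_none hpc D hD x hpre y ?_
    cases h : σ (pre ++ [y]) with
    | none => rfl
    | some a =>
      have h2 := hN _ (by simp [h] : (σ (pre ++ [y])).isSome)
      simp at h2
      omega
  | succ n ih =>
    intro pre hpre hlen
    refine sum_condFrom_step hM σ x _ hpre fun y => ?_
    cases h : σ (pre ++ [y]) with
    | none => exact sum_condFrom_child_none hpc D hD x hpre y h
    | some a =>
      refine ih (pre ++ [y]) (by simp [h]) ?_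
      have hl : (pre ++ [y]).length = pre.length + 1 := by simp
      omega

lemma sum_condDist [Fintype Y] {M : A → X → Y → ℝ} (hM : IsMechanism M)
    {σ : List Y → Option A} (h0 : (σ []).isSome) (hpc : PrefixClosed σ)
    {D : Finset (List Y)} (hD : ∀ l, (σ l).isSome → l ∈ D) (x : X) :
    ∑ ys ∈ (D ×ˢ (Finset.univ : Finset Y)).image (fun q : List Y × Y => q.1 ++ [q.2]),
      condDist M σ x ys = 1 := by
  rw [Finset.sum_congr rfl fun ys _ => condDist_eq_condFrom M σ x ys]
  have hN : ∀ l, (σ l).isSome → l.length ≤ D.sup List.length :=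
    fun l hl => Finset.le_sup (f := List.length) (hD l hl)
  exact sum_condFrom hM hpc hD hN x (D.sup List.length) [] h0 (by simp)

/-- Theorem 5.3: for every finite strategy `σ`,
`I_σ(S,p) ≤ I(X;[X]) = U(p) − Σ_c p(c) U(p(·|c))`; consequently the maximum
information flow `I_⋆(S,p) = sup_σ I_σ(S,p)` is at most `I(X;[X])`. -/
theorem leak_le_class_gain
    [Fintype X] [Fintype Y] [Fintype A] [Nonempty X] [Nonempty Y] [Nonempty A]
    (M : A → X → Y → ℝ) (hM : IsMechanism M)
    (U : (X → ℝ) → ℝ) (hU : IsUncertainty U)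
    (p : X → ℝ) (hp : p ∈ stdSimplex ℝ X) :
    (∀ σ : List Y → Option A, FiniteStrategy σ →
        leak U M σ p ≤ U p - classUncert U M p) ∧
      sSup {r : ℝ | ∃ σ : List Y → Option A, FiniteStrategy σ ∧ r = leak U M σ p} ≤
        U p - classUncert U M p := by
  have hpnn : ∀ x, 0 ≤ p x := hp.1
  have key : ∀ σ : List Y → Option A, FiniteStrategy σ →
      leak U M σ p ≤ U p - classUncert U M p := by
    intro σ hσ
    obtain ⟨h0, hpc, hfin⟩ := hσ
    set D : Finset (List Y) := hfin.toFinset with hDdef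
    have hD : ∀ l, (σ l).isSome → l ∈ D := fun l hl => hfin.mem_toFinset.mpr hl
    set E : Finset (List Y) := (D ×ˢ (Finset.univ : Finset Y)).image
      (fun q : List Y × Y => q.1 ++ [q.2]) with hEdef
    have hcd_nonneg : ∀ (x : X) (ys : List Y), 0 ≤ condDist M σ x ys := by
      intro x ys
      rw [condDist]
      split
      · exact likAux_nonneg hM σ x _ _
      · exact le_refl 0
    have hobs_nonneg : ∀ ys, 0 ≤ obsProb M σ p ys :=
      fun ys => Finset.sum_nonneg fun x _ => mul_nonneg (hpnn x) (hcd_nonneg x ys)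
    have hsum1 : ∀ x : X, ∑ ys ∈ E, condDist M σ x ys = 1 :=
      fun x => sum_condDist hM h0 hpc hD x
    have hcd_congr : ∀ (x : X) (ys : List Y),
        condDist M σ x ys = condDist M σ (Quotient.out (Quotient.mk (mSetoid M) x)) ys := by
      intro x ys
      have hrel : (mSetoid M).r x (Quotient.out (Quotient.mk (mSetoid M) x)) :=
        Quotient.exact (Quotient.out_eq _).symm
      rw [condDist, condDist]
      by_cases hcond : ys ≠ [] ∧ (σ ys.dropLast).isSome ∧ σ ys = none
      · rw [if_pos hcond, if_pos hcond]
        exact likAux_congr M σ hrel ys []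
      · rw [if_neg hcond, if_neg hcond]
    have hmass_nonneg : ∀ c : Quotient (mSetoid M), 0 ≤ classMass M p c :=
      fun c => Finset.sum_nonneg fun x _ => hpnn x
    have hmass_ge : ∀ (x : X) (c : Quotient (mSetoid M)), Quotient.mk (mSetoid M) x = c →
        p x ≤ classMass M p c := fun x c h =>
      Finset.single_le_sum (f := p) (fun i _ => hpnn i)
        (Finset.mem_filter.mpr ⟨Finset.mem_univ x, h⟩)
    have hobs_eq : ∀ ys, obsProb M σ p ys =
        ∑ c ∈ Finset.univ.image (Quotient.mk (mSetoid M)),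
          classMass M p c * condDist M σ (Quotient.out c) ys := by
      intro ys
      have hfib := Finset.sum_fiberwise_of_maps_to (g := Quotient.mk (mSetoid M))
        (fun x (_ : x ∈ (Finset.univ : Finset X)) =>
          Finset.mem_image_of_mem _ (Finset.mem_univ x))
        (fun x => joint M σ p x ys)
      rw [obsProb, ← hfib]
      apply Finset.sum_congr rfl
      intro c _
      rw [classMass, Finset.sum_mul]
      apply Finset.sum_congr rfl
      intro x hx
      rw [joint, hcd_congr x ys, (Finset.mem_filter.mp hx).2]
    have q_mem : ∀ c : Quotient (mSetoid M), classMass M p c ≠ 0 →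
        classCondDist M p c ∈ stdSimplex ℝ X := by
      intro c hc
      refine ⟨fun x => ?_, ?_⟩
      · rw [classCondDist]
        split
        · exact div_nonneg (hpnn x) (hmass_nonneg c)
        · exact le_refl 0
      · have : ∑ x : X, classCondDist M p c x
            = ∑ x ∈ Finset.univ.filter (fun x => Quotient.mk (mSetoid M) x = c),
                p x / classMass M p c := by
          rw [Finset.sum_filter]
          simp only [classCondDist]
        rw [this, ← Finset.sum_div, ← classMass, div_self hc]
    have hpost : ∀ ys, 0 < obsProb M σ p ys →
        post M σ p ys = ∑ c ∈ Finset.univ.image (Quotient.mk (mSetoid M)),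
          ((classMass M p c * condDist M σ (Quotient.out c) ys / obsProb M σ p ys) •
            classCondDist M p c) := by
      intro ys hys
      funext x
      rw [Finset.sum_apply, Finset.sum_eq_single_of_mem (Quotient.mk (mSetoid M) x)
        (Finset.mem_image_of_mem _ (Finset.mem_univ x))]
      · rw [Pi.smul_apply, smul_eq_mul, classCondDist, if_pos rfl]
        by_cases hm : classMass M p (Quotient.mk (mSetoid M) x) = 0
        · have hpx : p x = 0 := le_antisymm (hm ▸ hmass_ge x _ rfl) (hpnn x)
          rw [post, joint, hpx, hm]
          simp
        · rw [post, joint, hcd_congr x ys]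
          field_simp
      · intro c _ hne
        rw [Pi.smul_apply, smul_eq_mul, classCondDist, if_neg (fun h => hne h.symm), mul_zero]
    have hjensen : ∀ ys, 0 < obsProb M σ p ys →
        ∑ c ∈ Finset.univ.image (Quotient.mk (mSetoid M)),
          (classMass M p c * condDist M σ (Quotient.out c) ys / obsProb M σ p ys) *
            U (classCondDist M p c)
          ≤ U (post M σ p ys) := by
      intro ys hys
      set C : Finset (Quotient (mSetoid M)) := Finset.univ.image (Quotient.mk (mSetoid M))
        with hCdef
      set w : Quotient (mSetoid M) → ℝ :=
        fun c => classMass M p c * condDist M σ (Quotient.out c) ys / obsProb M σ p ys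
        with hwdef
      set T : Finset (Quotient (mSetoid M)) := C.filter (fun c => classMass M p c ≠ 0)
        with hTdef
      have hw_nonneg : ∀ c, 0 ≤ w c := fun c =>
        div_nonneg (mul_nonneg (hmass_nonneg c) (hcd_nonneg _ ys)) (le_of_lt hys)
      have hzero : ∀ c ∈ C, c ∉ T → w c = 0 := by
        intro c hc hcT
        have hm : classMass M p c = 0 := by
          by_contra h
          exact hcT (Finset.mem_filter.mpr ⟨hc, h⟩)
        rw [hwdef]
        simp [hm]
      have hwsumC : ∑ c ∈ C, w c = 1 := by
        rw [hwdef, ← Finset.sum_div, ← hobs_eq ys, div_self (ne_of_gt hys)]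
      have hwsum : ∑ c ∈ T, w c = 1 := by
        rw [Finset.sum_subset (Finset.filter_subset _ C) (fun c hc hcT => hzero c hc hcT)]
        exact hwsumC
      have hpostT : post M σ p ys = ∑ c ∈ T, w c • classCondDist M p c := by
        rw [hpost ys hys]
        refine (Finset.sum_subset (Finset.filter_subset _ C) ?_).symm
        intro c hc hcT
        show w c • classCondDist M p c = 0
        rw [hzero c hc hcT, zero_smul]
      have hle := hU.1.le_map_sum (t := T) (fun c _ => hw_nonneg c) hwsum
        (fun c hcT => q_mem c (Finset.mem_filter.mp hcT).2)
      rw [← hpostT] at hle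
      calc ∑ c ∈ C, w c * U (classCondDist M p c)
          = ∑ c ∈ T, w c * U (classCondDist M p c) :=
            (Finset.sum_subset (Finset.filter_subset _ C)
              (fun c hc hcT => by rw [hzero c hc hcT, zero_mul])).symm
        _ = ∑ c ∈ T, w c • U (classCondDist M p c) := by
            simp [smul_eq_mul]
        _ ≤ U (post M σ p ys) := hle
    have hkey : ∀ ys, ∑ c ∈ Finset.univ.image (Quotient.mk (mSetoid M)),
        (classMass M p c * U (classCondDist M p c)) * condDist M σ (Quotient.out c) ys
        ≤ obsProb M σ p ys * U (post M σ p ys) := by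
      intro ys
      rcases (hobs_nonneg ys).lt_or_eq with hpos | hzero
      · calc ∑ c ∈ Finset.univ.image (Quotient.mk (mSetoid M)),
            (classMass M p c * U (classCondDist M p c)) * condDist M σ (Quotient.out c) ys
            = obsProb M σ p ys *
              ∑ c ∈ Finset.univ.image (Quotient.mk (mSetoid M)),
                (classMass M p c * condDist M σ (Quotient.out c) ys / obsProb M σ p ys) *
                  U (classCondDist M p c) := by
              rw [Finset.mul_sum]
              apply Finset.sum_congr rfl
              intro c _
              field_simp
          _ ≤ obsProb M σ p ys * U (post M σ p ys) :=
              mul_le_mul_of_nonneg_left (hjensen ys hpos) (le_of_lt hpos)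
      · have hterms : ∀ c ∈ Finset.univ.image (Quotient.mk (mSetoid M)),
            classMass M p c * condDist M σ (Quotient.out c) ys = 0 := by
          have h := (hobs_eq ys).symm.trans hzero.symm
          exact (Finset.sum_eq_zero_iff_of_nonneg
            (fun c _ => mul_nonneg (hmass_nonneg c) (hcd_nonneg _ ys))).mp h
        rw [← hzero, zero_mul]
        apply le_of_eq
        apply Finset.sum_eq_zero
        intro c hc
        calc (classMass M p c * U (classCondDist M p c)) * condDist M σ (Quotient.out c) ys
            = U (classCondDist M p c) * (classMass M p c * condDist M σ (Quotient.out c) ys) := by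
              ring
          _ = 0 := by rw [hterms c hc, mul_zero]
    have hcu : classUncert U M p ≤ condUncert U M σ p := by
      have htsum : condUncert U M σ p = ∑ ys ∈ E, obsProb M σ p ys * U (post M σ p ys) := by
        rw [condUncert]
        apply tsum_eq_sum
        intro ys hys
        have hcd0 : ∀ x, condDist M σ x ys = 0 := by
          intro x
          have hnc : ¬(ys ≠ [] ∧ (σ ys.dropLast).isSome ∧ σ ys = none) := by
            rintro ⟨h1, h2, h3⟩
            exact hys (Finset.mem_image.mpr ⟨(ys.dropLast, ys.getLast h1),
              Finset.mem_product.mpr ⟨hD _ h2, Finset.mem_univ _⟩,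
              List.dropLast_append_getLast h1⟩)
          rw [condDist, if_neg hnc]
        have hobs0 : obsProb M σ p ys = 0 := by
          rw [obsProb]
          apply Finset.sum_eq_zero
          intro x _
          rw [joint, hcd0 x, mul_zero]
        rw [hobs0, zero_mul]
      rw [htsum, classUncert]
      calc ∑ c ∈ Finset.univ.image (Quotient.mk (mSetoid M)),
            classMass M p c * U (classCondDist M p c)
          = ∑ c ∈ Finset.univ.image (Quotient.mk (mSetoid M)), ∑ ys ∈ E,
              (classMass M p c * U (classCondDist M p c)) *
                condDist M σ (Quotient.out c) ys := by
            apply Finset.sum_congr rfl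
            intro c _
            rw [← Finset.mul_sum, hsum1 (Quotient.out c), mul_one]
        _ = ∑ ys ∈ E, ∑ c ∈ Finset.univ.image (Quotient.mk (mSetoid M)),
              (classMass M p c * U (classCondDist M p c)) *
                condDist M σ (Quotient.out c) ys := Finset.sum_comm
        _ ≤ ∑ ys ∈ E, obsProb M σ p ys * U (post M σ p ys) :=
            Finset.sum_le_sum fun ys _ => hkey ys
    rw [leak]
    exact sub_le_sub_left hcu (U p)
  have hex : FiniteStrategy
      (fun ys : List Y => if ys = [] then some (Classical.arbitrary A) else none) := by
    refine ⟨by simp, ?_, ?_⟩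
    · intro l l' hpre hsome
      by_cases h : l' = []
      · subst h
        have hl : l = [] := List.prefix_nil.mp hpre
        simp [hl]
      · simp [h] at hsome
    · apply Set.Finite.subset (Set.finite_singleton ([] : List Y))
      intro l hl
      simp only [Set.mem_setOf_eq] at hl
      by_cases h : l = []
      · simp [h]
      · simp [h] at hl
  refine ⟨key, ?_⟩
  apply csSup_le
  · exact ⟨_, _, hex, rfl⟩
  · rintro r ⟨σ, hσ, rfl⟩
    exact key σ hσ

end
end

section
/- Let S be an action-based randomization mechanism, U an uncertainty measure, and for each prior p and integer l ≥ 1 let M_l(p) denote the maximum of I_σ(S,p) over all strategies σ of length at most l (with M_0(p)=0). Then M_l satisfies the Bellman equation M_l(p) = max_{a∈Act} { I_{[a]}(S,p) + Σ_{y : p_a(y)>0} p_a(y) · M_{l−1}(p^{ay}) }, where p_a(y) = Σ_x p(x)p_a(y|x) and p^{ay}(x) = p(x)p_a(y|x)/p_a(y). In particular, there is an optimal strategy σ* of length l whose first action maximizes the right-hand side and whose y-derivatives are optimal strategies of length l−1 for the posteriors p^{ay}. -/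
open scoped BigOperators Classical

noncomputable section

variable {X Y A : Type*}

/-- `p_a(y) = Σ_x p(x)·p_a(y|x)`: probability of observing `y` when playing `a`. -/
def actObs [Fintype X] (M : A → X → Y → ℝ) (p : X → ℝ) (a : A) (y : Y) : ℝ :=
  ∑ x : X, p x * M a x y

/-- `p^{ay}`: the Bayesian posterior after playing `a` and observing `y`. -/
def bayes [Fintype X] (M : A → X → Y → ℝ) (p : X → ℝ) (a : A) (y : Y) : X → ℝ :=
  fun x => p x * M a x y / actObs M p a y

/-- `M_l(p)`: the maximal leakage over all strategies of length at most `l`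
(for `l = 0` the set is empty and `sSup ∅ = 0`, i.e. `M_0(p) = 0`). -/
def maxLeak [Fintype X] (U : (X → ℝ) → ℝ) (M : A → X → Y → ℝ) (p : X → ℝ) (l : ℕ) : ℝ :=
  sSup {r : ℝ | ∃ σ : List Y → Option A,
    FiniteStrategy σ ∧ (∀ ys, (σ ys).isSome → ys.length + 1 ≤ l) ∧ r = leak U M σ p}

/-!
A strategy with first action `a` is `[a]` followed by its `y`-derivatives, and the
derivative after `y` runs on the posterior `p^{ay}`. Hence the leakage splits as
`I_σ(p) = I_[a](p) + Σ_y p_a(y) · I_{σ_y}(p^{ay})`, where branches on which `σ` stops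
contribute `0`. Bounding each `I_{σ_y}` by `M_{l-1}(p^{ay})` gives `≤`; on the branches where
`σ` stops one uses `M_{l-1} ≥ 0`, which holds because `I_[a] ≥ 0` by Jensen's inequality for
the concave `U` (the prior is the `p_a`-mixture of the posteriors). Conversely, playing `a` and
then optimal strategies for the posteriors realises the right-hand side, giving `≥`. Only
finitely many leakage values come from strategies of bounded length, so all suprema are
attained.
-/

open Finset

def stratDeriv (σ : List Y → Option A) (y : Y) : List Y → Option A := fun t => σ (y :: t)

def consStrat (a : A) (τ : Y → List Y → Option A) : List Y → Option A
  | [] => some a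
  | y :: t => τ y t

def LengthLE (σ : List Y → Option A) (l : ℕ) : Prop :=
  ∀ ys, (σ ys).isSome → ys.length + 1 ≤ l

theorem stratDeriv_consStrat (a : A) (τ : Y → List Y → Option A) (y : Y) :
    stratDeriv (consStrat a τ) y = τ y := rfl

def listsLE (Y : Type*) [Fintype Y] (n : ℕ) : Finset (List Y) :=
  (List.finite_length_le Y n).toFinset

theorem mem_listsLE [Fintype Y] {n : ℕ} {ys : List Y} : ys ∈ listsLE Y n ↔ ys.length ≤ n :=
  (List.finite_length_le Y n).mem_toFinset

theorem sum_listsLE_succ [Fintype Y] {β : Type*} [AddCommMonoid β] (n : ℕ) (f : List Y → β) :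
    ∑ ys ∈ listsLE Y (n + 1), f ys = f [] + ∑ y, ∑ t ∈ listsLE Y n, f (y :: t) := by
  have hsplit : listsLE Y (n + 1) =
      insert [] ((univ ×ˢ listsLE Y n).image fun q : Y × List Y => q.1 :: q.2) := by
    ext (_ | ⟨y, t⟩) <;> simp [mem_listsLE]
  rw [hsplit, sum_insert (by simp),
    sum_image fun _ _ _ _ h => Prod.ext_iff.2 (List.cons_eq_cons.1 h), sum_product]

section Strategy

variable {σ : List Y → Option A}

theorem LengthLE.stratDeriv {n : ℕ} (hσ : LengthLE σ (n + 1)) (y : Y) :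
    LengthLE (stratDeriv σ y) n := fun t ht => by
  simpa using hσ (y :: t) ht

theorem lengthLE_consStrat {n : ℕ} (a : A) {τ : Y → List Y → Option A}
    (hτ : ∀ y, LengthLE (τ y) n) : LengthLE (consStrat a τ) (n + 1)
  | [], _ => by simp
  | y :: t, ht => by simpa using hτ y t ht

theorem FiniteStrategy.stratDeriv (hσ : FiniteStrategy σ) {y : Y} (hy : (σ [y]).isSome) :
    FiniteStrategy (stratDeriv σ y) :=
  ⟨hy, fun t t' ht hs => hσ.2.1 (y :: t) (y :: t') (List.cons_prefix_cons.2 ⟨rfl, ht⟩) hs,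
    hσ.2.2.preimage List.cons_injective.injOn⟩

theorem finiteStrategy_consStrat [Finite Y] (a : A) {τ : Y → List Y → Option A}
    (hτ : ∀ y, FiniteStrategy (τ y)) : FiniteStrategy (consStrat a τ) := by
  refine ⟨rfl, ?_, ?_⟩
  · rintro (_ | ⟨y, t⟩) l' hpre hs
    · rfl
    · obtain ⟨t', rfl, ht⟩ : ∃ t', l' = y :: t' ∧ t <+: t' := by
        obtain ⟨u, rfl⟩ := hpre
        exact ⟨t ++ u, rfl, List.prefix_append t u⟩
      exact (hτ y).2.1 t t' ht hs
  · refine ((Set.finite_singleton []).union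
      (Set.finite_iUnion fun y => (hτ y).2.2.image (y :: ·))).subset ?_
    rintro (_ | ⟨y, t⟩) hs
    · exact Or.inl rfl
    · exact Or.inr (Set.mem_iUnion.2 ⟨y, t, hs, rfl⟩)

theorem ofList_singleton_isSome_iff (a : A) (ys : List Y) :
    ((ofList [a] : List Y → Option A) ys).isSome ↔ ys = [] := by
  cases ys <;> simp [ofList]

theorem finiteStrategy_ofList_singleton (a : A) :
    FiniteStrategy (ofList [a] : List Y → Option A) := by
  simp only [FiniteStrategy, PrefixClosed, ofList_singleton_isSome_iff]
  exact ⟨trivial, fun l l' h hl' => List.prefix_nil.1 (hl' ▸ h), Set.finite_singleton []⟩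

theorem lengthLE_ofList_singleton (a : A) {l : ℕ} (hl : 1 ≤ l) :
    LengthLE (ofList [a] : List Y → Option A) l := fun ys hys => by
  rw [ofList_singleton_isSome_iff] at hys
  simpa [hys] using hl

theorem LengthLE.eq_none {l : ℕ} (hσ : LengthLE σ l) {ys : List Y} (hys : l ≤ ys.length) :
    σ ys = none :=
  Option.not_isSome_iff_eq_none.1 fun hs => by have := hσ ys hs; omega

theorem finite_setOf_lengthLE [Fintype Y] [Finite A] (l : ℕ) :
    {σ : List Y → Option A | LengthLE σ l}.Finite := by
  refine Set.Finite.of_finite_image (f := fun σ (ys : listsLE Y l) => σ ys) (Set.toFinite _) ?_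
  intro σ hσ τ hτ h
  ext1 ys
  by_cases hys : ys.length ≤ l
  · exact congrFun h ⟨ys, mem_listsLE.2 hys⟩
  · rw [LengthLE.eq_none hσ (by omega), LengthLE.eq_none hτ (by omega)]

end Strategy

section CondDist

variable (M : A → X → Y → ℝ) {σ : List Y → Option A} (x : X)

theorem likAux_cons_prefix (σ : List Y → Option A) (y : Y) :
    ∀ ys pre : List Y, likAux M σ x (y :: pre) ys = likAux M (stratDeriv σ y) x pre ys
  | [], _ => rfl
  | z :: ys, pre => congrArg (_ * ·) (likAux_cons_prefix σ y ys (pre ++ [z]))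

theorem condDist_nil : condDist M σ x [] = 0 := by
  simp [condDist]

variable {M x} {a : A}

theorem condDist_cons (h0 : σ [] = some a) (y : Y) {t : List Y} (ht : t ≠ []) :
    condDist M σ x (y :: t) = M a x y * condDist M (stratDeriv σ y) x t := by
  have hlik : likAux M σ x [] (y :: t) = M a x y * likAux M (stratDeriv σ y) x [] t := by
    simp only [likAux, h0, Option.elim_some, List.nil_append, likAux_cons_prefix]
  simp only [condDist, List.dropLast_cons_of_ne_nil ht, hlik, stratDeriv]
  split_ifs <;> simp_all

theorem condDist_singleton (h0 : σ [] = some a) (y : Y) :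
    condDist M σ x [y] = if σ [y] = none then M a x y else 0 := by
  simp [condDist, likAux, h0]

theorem condDist_cons_eq_zero (hpc : PrefixClosed σ) {y : Y} (hy : σ [y] = none)
    {t : List Y} (ht : t ≠ []) : condDist M σ x (y :: t) = 0 := by
  rw [condDist, if_neg]
  rintro ⟨-, hs, -⟩
  rw [List.dropLast_cons_of_ne_nil ht] at hs
  simpa [hy] using hpc [y] _ (List.cons_prefix_cons.2 ⟨rfl, List.nil_prefix⟩) hs

theorem condDist_eq_zero_of_lengthLE {l : ℕ} (hσ : LengthLE σ l) {ys : List Y}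
    (hys : l < ys.length) : condDist M σ x ys = 0 := by
  rw [condDist, if_neg]
  rintro ⟨-, hs, -⟩
  have := hσ _ hs
  simp only [List.length_dropLast] at this
  omega

end CondDist

section Bayes

variable [Fintype X] [Fintype Y] {M : A → X → Y → ℝ} {p : X → ℝ}

theorem actObs_nonneg (hM : IsMechanism M) (hp : ∀ x, 0 ≤ p x) (a : A) (y : Y) :
    0 ≤ actObs M p a y :=
  sum_nonneg fun x _ => mul_nonneg (hp x) ((hM a x).1 y)

theorem actObs_mul_bayes (hM : IsMechanism M) (hp : ∀ x, 0 ≤ p x) (a : A) (y : Y) (x : X) :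
    actObs M p a y * bayes M p a y x = p x * M a x y := by
  by_cases ha : actObs M p a y = 0
  · rw [ha, zero_mul, eq_comm]
    exact (sum_eq_zero_iff_of_nonneg fun x _ => mul_nonneg (hp x) ((hM a x).1 y)).1 ha x
      (mem_univ x)
  · exact mul_div_cancel₀ _ ha

theorem bayes_mem_stdSimplex (hM : IsMechanism M) (hp : ∀ x, 0 ≤ p x) {a : A} {y : Y}
    (ha : actObs M p a y ≠ 0) : bayes M p a y ∈ stdSimplex ℝ X :=
  ⟨fun x => div_nonneg (mul_nonneg (hp x) ((hM a x).1 y)) (actObs_nonneg hM hp a y),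
    by simp only [bayes, ← sum_div]; exact div_self ha⟩

theorem sum_actObs (hM : IsMechanism M) (hp : p ∈ stdSimplex ℝ X) (a : A) :
    ∑ y, actObs M p a y = 1 := by
  simp only [actObs]
  rw [sum_comm]
  simp only [← mul_sum, (hM a _).2, mul_one, hp.2]

theorem sum_actObs_smul_bayes (hM : IsMechanism M) (hp : p ∈ stdSimplex ℝ X) (a : A) :
    ∑ y, actObs M p a y • bayes M p a y = p := by
  ext x
  simp only [Finset.sum_apply, Pi.smul_apply, smul_eq_mul, actObs_mul_bayes hM hp.1, ← mul_sum,
    (hM a x).2, mul_one]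

theorem sum_actObs_mul_bayes_le {U : (X → ℝ) → ℝ} (hU : ConcaveOn ℝ (stdSimplex ℝ X) U)
    (hM : IsMechanism M) (hp : p ∈ stdSimplex ℝ X) (a : A) :
    ∑ y, actObs M p a y * U (bayes M p a y) ≤ U p := by
  set t := univ.filter fun y => actObs M p a y ≠ 0
  calc ∑ y, actObs M p a y * U (bayes M p a y)
      = ∑ y ∈ t, actObs M p a y • U (bayes M p a y) :=
        (sum_filter_of_ne fun _ _ h => left_ne_zero_of_mul h).symm
    _ ≤ U (∑ y ∈ t, actObs M p a y • bayes M p a y) :=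
        hU.le_map_sum (fun y _ => actObs_nonneg hM hp.1 a y)
          (by rw [sum_filter_ne_zero, sum_actObs hM hp])
          (fun y hy => bayes_mem_stdSimplex hM hp.1 (mem_filter.1 hy).2)
    _ = U p := by
        rw [sum_filter_of_ne fun _ _ h => left_ne_zero_of_smul h, sum_actObs_smul_bayes hM hp]

end Bayes

section CondUncert

variable [Fintype X] {M : A → X → Y → ℝ} {σ : List Y → Option A} {p : X → ℝ}
  {a : A} {y : Y}

theorem obsProb_nil : obsProb M σ p [] = 0 := by
  simp [obsProb, joint, condDist_nil]

theorem obsProb_singleton (h0 : σ [] = some a) (hy : σ [y] = none) :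
    obsProb M σ p [y] = actObs M p a y := by
  simp [obsProb, joint, condDist_singleton h0, hy, actObs]

theorem post_singleton (h0 : σ [] = some a) (hy : σ [y] = none) :
    post M σ p [y] = bayes M p a y := by
  ext x
  simp [post, obsProb_singleton h0 hy, joint, condDist_singleton h0, hy, bayes]

theorem obsProb_cons_eq_zero (hpc : PrefixClosed σ) (hy : σ [y] = none) {t : List Y}
    (ht : t ≠ []) : obsProb M σ p (y :: t) = 0 := by
  simp [obsProb, joint, condDist_cons_eq_zero hpc hy ht]

variable [Fintype Y]

theorem condUncert_eq_sum (U : (X → ℝ) → ℝ) {m : ℕ} (hσ : LengthLE σ m) :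
    condUncert U M σ p = ∑ ys ∈ listsLE Y m, obsProb M σ p ys * U (post M σ p ys) := by
  refine tsum_eq_sum fun ys hys => ?_
  have hlong : m < ys.length := by simpa [mem_listsLE] using hys
  simp [obsProb, joint, condDist_eq_zero_of_lengthLE hσ hlong]

theorem joint_cons (hM : IsMechanism M) (hp : ∀ x, 0 ≤ p x) (h0 : σ [] = some a)
    (hy : (σ [y]).isSome) (x : X) (t : List Y) :
    joint M σ p x (y :: t) = actObs M p a y * joint M (stratDeriv σ y) (bayes M p a y) x t := by
  rcases eq_or_ne t [] with rfl | ht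
  · simp [joint, condDist_singleton h0, Option.ne_none_iff_isSome.2 hy, condDist_nil]
  · rw [joint, joint, condDist_cons h0 y ht, ← mul_assoc, ← actObs_mul_bayes hM hp, mul_assoc]

theorem obsProb_cons (hM : IsMechanism M) (hp : ∀ x, 0 ≤ p x) (h0 : σ [] = some a)
    (hy : (σ [y]).isSome) (t : List Y) :
    obsProb M σ p (y :: t) = actObs M p a y * obsProb M (stratDeriv σ y) (bayes M p a y) t := by
  simp only [obsProb, joint_cons hM hp h0 hy, mul_sum]

theorem post_cons (hM : IsMechanism M) (hp : ∀ x, 0 ≤ p x) (h0 : σ [] = some a)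
    (hy : (σ [y]).isSome) (ha : actObs M p a y ≠ 0) (t : List Y) :
    post M σ p (y :: t) = post M (stratDeriv σ y) (bayes M p a y) t := by
  ext x
  rw [post, post, joint_cons hM hp h0 hy, obsProb_cons hM hp h0 hy, mul_div_mul_left _ _ ha]

theorem condUncert_eq_sum_stratDeriv (U : (X → ℝ) → ℝ) (hM : IsMechanism M)
    (hp : ∀ x, 0 ≤ p x) (h0 : σ [] = some a) (hpc : PrefixClosed σ) {n : ℕ}
    (hσ : LengthLE σ (n + 1)) :
    condUncert U M σ p = ∑ y, if (σ [y]).isSome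
      then actObs M p a y * condUncert U M (stratDeriv σ y) (bayes M p a y)
      else actObs M p a y * U (bayes M p a y) := by
  rw [condUncert_eq_sum U hσ, sum_listsLE_succ, obsProb_nil, zero_mul, zero_add]
  refine sum_congr rfl fun y _ => ?_
  split_ifs with hy
  · rw [condUncert_eq_sum U (hσ.stratDeriv y), mul_sum]
    refine sum_congr rfl fun t _ => ?_
    by_cases ha : actObs M p a y = 0
    · simp [obsProb_cons hM hp h0 hy, ha]
    · rw [obsProb_cons hM hp h0 hy, post_cons hM hp h0 hy ha, mul_assoc]
  · have hnone : σ [y] = none := Option.not_isSome_iff_eq_none.1 hy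
    rw [sum_eq_single_of_mem [] (mem_listsLE.2 (Nat.zero_le n)) fun t _ ht => by
      rw [obsProb_cons_eq_zero hpc hnone ht, zero_mul]]
    rw [obsProb_singleton h0 hnone, post_singleton h0 hnone]

end CondUncert

section Leak

variable [Fintype X] [Fintype Y] {U : (X → ℝ) → ℝ} {M : A → X → Y → ℝ}
  {p : X → ℝ}

theorem condUncert_ofList_singleton (hM : IsMechanism M) (hp : ∀ x, 0 ≤ p x) (a : A) :
    condUncert U M (ofList [a]) p = ∑ y, actObs M p a y * U (bayes M p a y) := by
  rw [condUncert_eq_sum_stratDeriv U hM hp rfl (finiteStrategy_ofList_singleton a).2.1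
    (lengthLE_ofList_singleton a le_rfl)]
  simp [ofList_singleton_isSome_iff]

theorem leak_ofList_singleton_nonneg (hU : ConcaveOn ℝ (stdSimplex ℝ X) U)
    (hM : IsMechanism M) (hp : p ∈ stdSimplex ℝ X) (a : A) :
    0 ≤ leak U M (ofList [a]) p := by
  rw [leak, condUncert_ofList_singleton hM hp.1, sub_nonneg]
  exact sum_actObs_mul_bayes_le hU hM hp a

theorem leak_eq_add_sum_stratDeriv (hM : IsMechanism M) (hp : ∀ x, 0 ≤ p x)
    {σ : List Y → Option A} {a : A} (h0 : σ [] = some a) (hpc : PrefixClosed σ) {n : ℕ}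
    (hσ : LengthLE σ (n + 1)) :
    leak U M σ p = leak U M (ofList [a]) p + ∑ y, if (σ [y]).isSome
      then actObs M p a y * leak U M (stratDeriv σ y) (bayes M p a y) else 0 := by
  rw [leak, leak, condUncert_eq_sum_stratDeriv U hM hp h0 hpc hσ,
    condUncert_ofList_singleton hM hp, sub_add, ← sum_sub_distrib]
  congr 2 with y
  split_ifs
  · rw [leak]; ring
  · ring

end Leak

section MaxLeak

variable [Fintype X] (U : (X → ℝ) → ℝ) (M : A → X → Y → ℝ) (p : X → ℝ)

def leakValues (l : ℕ) : Set ℝ :=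
  {r | ∃ σ : List Y → Option A, FiniteStrategy σ ∧ LengthLE σ l ∧ r = leak U M σ p}

theorem maxLeak_eq_sSup (l : ℕ) : maxLeak U M p l = sSup (leakValues U M p l) := rfl

theorem maxLeak_zero : maxLeak U M p 0 = 0 := by
  have hempty : leakValues U M p 0 = ∅ :=
    Set.eq_empty_of_forall_notMem fun _ ⟨σ, hσ, hσl, _⟩ => absurd (hσl [] hσ.1) (by simp)
  rw [maxLeak_eq_sSup, hempty, Real.sSup_empty]

variable [Fintype Y] [Fintype A]

theorem finite_leakValues (l : ℕ) : (leakValues U M p l).Finite :=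
  ((finite_setOf_lengthLE l).image fun σ => leak U M σ p).subset
    fun _ ⟨σ, _, hσ, hr⟩ => ⟨σ, hσ, hr.symm⟩

theorem exists_leak_eq_maxLeak [Nonempty A] {l : ℕ} (hl : 1 ≤ l) :
    ∃ σ : List Y → Option A,
      FiniteStrategy σ ∧ LengthLE σ l ∧ leak U M σ p = maxLeak U M p l := by
  obtain ⟨a⟩ := ‹Nonempty A›
  have hne : (leakValues U M p l).Nonempty :=
    ⟨_, ofList [a], finiteStrategy_ofList_singleton a, lengthLE_ofList_singleton a hl, rfl⟩
  obtain ⟨σ, hσ, hσl, hmax⟩ := hne.csSup_mem (finite_leakValues U M p l)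
  exact ⟨σ, hσ, hσl, hmax.symm⟩

variable {U M p}

theorem leak_le_maxLeak {σ : List Y → Option A} {l : ℕ} (hσ : FiniteStrategy σ)
    (hσl : LengthLE σ l) : leak U M σ p ≤ maxLeak U M p l :=
  le_csSup (finite_leakValues U M p l).bddAbove ⟨σ, hσ, hσl, rfl⟩

theorem maxLeak_nonneg [Nonempty A] (hU : ConcaveOn ℝ (stdSimplex ℝ X) U) (hM : IsMechanism M)
    (hp : p ∈ stdSimplex ℝ X) (l : ℕ) : 0 ≤ maxLeak U M p l := by
  rcases Nat.eq_zero_or_pos l with rfl | hl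
  · rw [maxLeak_zero]
  · obtain ⟨a⟩ := ‹Nonempty A›
    exact (leak_ofList_singleton_nonneg hU hM hp a).trans
      (leak_le_maxLeak (finiteStrategy_ofList_singleton a) (lengthLE_ofList_singleton a hl))

end MaxLeak

section Bellman

variable [Fintype X] [Fintype Y] [Fintype A] [Nonempty A] {U : (X → ℝ) → ℝ}
  {M : A → X → Y → ℝ} {p : X → ℝ}

theorem leak_le_bellman (hU : ConcaveOn ℝ (stdSimplex ℝ X) U) (hM : IsMechanism M)
    (hp : ∀ x, 0 ≤ p x) {σ : List Y → Option A} {a : A} (h0 : σ [] = some a)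
    (hσ : FiniteStrategy σ) {n : ℕ} (hσl : LengthLE σ (n + 1)) :
    leak U M σ p ≤
      leak U M (ofList [a]) p + ∑ y, actObs M p a y * maxLeak U M (bayes M p a y) n := by
  rw [leak_eq_add_sum_stratDeriv hM hp h0 hσ.2.1 hσl]
  gcongr with y
  split_ifs with hy
  · exact mul_le_mul_of_nonneg_left
      (leak_le_maxLeak (hσ.stratDeriv hy) (hσl.stratDeriv y)) (actObs_nonneg hM hp a y)
  · rcases (actObs_nonneg hM hp a y).eq_or_lt with ha | ha
    · rw [← ha, zero_mul]
    · exact mul_nonneg ha.le (maxLeak_nonneg hU hM (bayes_mem_stdSimplex hM hp ha.ne') n)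

theorem bellman_le_maxLeak (hM : IsMechanism M) (hp : ∀ x, 0 ≤ p x) (a : A) (n : ℕ) :
    leak U M (ofList [a]) p + ∑ y, actObs M p a y * maxLeak U M (bayes M p a y) n ≤
      maxLeak U M p (n + 1) := by
  rcases Nat.eq_zero_or_pos n with rfl | hn
  · simpa [maxLeak_zero] using leak_le_maxLeak (finiteStrategy_ofList_singleton a)
      (lengthLE_ofList_singleton a le_rfl)
  choose τ hτ hτl hτmax using fun y => exists_leak_eq_maxLeak U M (bayes M p a y) hn
  have hconsStrat : FiniteStrategy (consStrat a τ) := finiteStrategy_consStrat a hτ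
  calc leak U M (ofList [a]) p + ∑ y, actObs M p a y * maxLeak U M (bayes M p a y) n
      = leak U M (consStrat a τ) p := by
        rw [leak_eq_add_sum_stratDeriv hM hp rfl hconsStrat.2.1 (lengthLE_consStrat a hτl)]
        simp only [stratDeriv_consStrat, consStrat, (hτ _).1, if_true, hτmax]
    _ ≤ maxLeak U M p (n + 1) := leak_le_maxLeak hconsStrat (lengthLE_consStrat a hτl)

end Bellman

theorem bellman_equation_general
    [Fintype X] [Fintype Y] [Fintype A] [Nonempty A]
    (M : A → X → Y → ℝ) (hM : IsMechanism M)
    (U : (X → ℝ) → ℝ) (hU : IsUncertainty U)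
    (p : X → ℝ) (hp : p ∈ stdSimplex ℝ X)
    (l : ℕ) (hl : 1 ≤ l) :
    maxLeak U M p l =
        Finset.univ.sup' Finset.univ_nonempty (fun a : A =>
          leak U M (ofList [a] : List Y → Option A) p +
            ∑ y : Y, actObs M p a y * maxLeak U M (bayes M p a y) (l - 1)) ∧
      ∃ σ : List Y → Option A,
        FiniteStrategy σ ∧ (∀ ys, (σ ys).isSome → ys.length + 1 ≤ l) ∧
          leak U M σ p = maxLeak U M p l := by
  obtain ⟨n, rfl⟩ : ∃ n, l = n + 1 := ⟨l - 1, by omega⟩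
  obtain ⟨σ, hσ, hσl, hσmax⟩ := exists_leak_eq_maxLeak U M p hl
  obtain ⟨a, h0⟩ := Option.isSome_iff_exists.1 hσ.1
  rw [Nat.add_sub_cancel]
  refine ⟨le_antisymm ?_ (sup'_le _ _ fun a _ => bellman_le_maxLeak hM hp.1 a n),
    σ, hσ, hσl, hσmax⟩
  rw [← hσmax]
  exact le_sup'_of_le _ (mem_univ a) (leak_le_bellman hU.1 hM hp.1 h0 hσ hσl)

/-- Corollary 6.2, Bellman equation: for `l ≥ 1`,
`M_l(p) = max_a { I_{[a]}(S,p) + Σ_y p_a(y)·M_{l−1}(p^{ay}) }` (terms with `p_a(y)=0`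
vanish), and the maximum is attained by an optimal strategy `σ*` of length at most `l`. -/
theorem bellman_equation
    [Fintype X] [Fintype Y] [Fintype A] [Nonempty X] [Nonempty Y] [Nonempty A]
    (M : A → X → Y → ℝ) (hM : IsMechanism M)
    (U : (X → ℝ) → ℝ) (hU : IsUncertainty U)
    (p : X → ℝ) (hp : p ∈ stdSimplex ℝ X)
    (l : ℕ) (hl : 1 ≤ l) :
    maxLeak U M p l =
        Finset.univ.sup' Finset.univ_nonempty (fun a : A =>
          leak U M (ofList [a] : List Y → Option A) p +
            ∑ y : Y, actObs M p a y * maxLeak U M (bayes M p a y) (l - 1)) ∧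
      ∃ σ : List Y → Option A,
        FiniteStrategy σ ∧ (∀ ys, (σ ys).isSome → ys.length + 1 ≤ l) ∧
          leak U M σ p = maxLeak U M p l :=
  bellman_equation_general M hM U hU p hp l hl

end
end
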